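/- arXiv:2111.07235 — 5 statements merged into one kernel-verified Lean document; each statement's English description precedes it below -/
import Mathlib

section
/- Fix integers n ≥ 1 and N ≥ 1. Consider a sequence of N 'chances' processed by agents n, n-1, …, 1 as follows: each item gives a chance first to agent n; an agent k with its own counter takes the item when its counter (incremented by 1 at each chance it receives) reaches k, in which case the counter resets to 0 and subsequent agents get no chance for that item; otherwise the chance passes to agent k-1; agent 1 always takes an item when it receives a chance. Then for each k ∈ {1, …, n}, the number of items taken by agent k is at least N/n - 1. -/
/-!
Let `C j` be the number of chances agent `j` has received. Agent `n` receives every item's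
chance, so `C n = N`, and agent `j < n` receives exactly the chances agent `j + 1` passed on.
Since agent `j + 1` takes one item per `j + 1` chances, it passes on at least a `j / (j + 1)`
fraction of them, so `C j / j` is antitone in `j` and `C k / k ≥ C n / n = N / n`. As agent `k`
takes `⌊C k / k⌋` items, it takes more than `N / n - 1`.
-/

/-- One chance: the counters `c`, offered to agents `k, k-1, …, 1` in turn.
Returns the agent who takes the item and the updated counters. -/
def passStep : (ℕ → ℕ) → ℕ → ℕ × (ℕ → ℕ)
  | c, 0 => (0, c)
  | c, (k + 1) =>
    let c' := Function.update c (k + 1) (c (k + 1) + 1)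
    if c' (k + 1) = k + 1 then (k + 1, Function.update c' (k + 1) 0)
    else passStep c' k

/-- Process `N` items with `n` agents; returns (number of items taken by each agent,
final counters). Each item gives the first chance to agent `n`. -/
def runChances (n : ℕ) : ℕ → ((ℕ → ℕ) × (ℕ → ℕ))
  | 0 => (fun _ => 0, fun _ => 0)
  | (N + 1) =>
    let r := runChances n N
    let s := passStep r.2 n
    (Function.update r.1 s.1 (r.1 s.1 + 1), s.2)

lemma passStep_spec (k : ℕ) (hk : 1 ≤ k) (c : ℕ → ℕ) (hc : ∀ j, 1 ≤ j → c j < j) :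
    (passStep c k).1 ∈ Finset.Icc 1 k ∧
    (∀ j, 1 ≤ j → (passStep c k).2 j < j) ∧
    -- with `w` the taker: agents `w, …, k` each get one chance, and `w` trades `w` of them for the item
    ∀ j, (passStep c k).2 j + (if j = (passStep c k).1 then j else 0) =
      c j + (if (passStep c k).1 ≤ j ∧ j ≤ k then 1 else 0) := by
  induction k generalizing c with
  | zero => omega
  | succ k ih =>
    have hck := hc (k + 1) (by omega)
    by_cases htake : c (k + 1) + 1 = k + 1
    · have hstep : passStep c (k + 1) =
          (k + 1, Function.update (Function.update c (k + 1) (c (k + 1) + 1)) (k + 1) 0) := by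
        simp [passStep, htake]
      rw [hstep]
      refine ⟨by simp, fun j hj => ?_, fun j => ?_⟩ <;>
        rcases eq_or_ne j (k + 1) with rfl | hj <;> simp [*]
      omega
    · have hstep : passStep c (k + 1) =
          passStep (Function.update c (k + 1) (c (k + 1) + 1)) k := by
        simp only [passStep, Function.update_self, htake, if_false]
      have hk : 1 ≤ k := by
        rcases Nat.eq_zero_or_pos k with rfl | hk
        · have := hc 1 le_rfl; omega
        · exact hk
      have hbump_lt : ∀ j, 1 ≤ j → Function.update c (k + 1) (c (k + 1) + 1) j < j := by
        intro j hj
        rcases eq_or_ne j (k + 1) with rfl | hj'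
        · simp; omega
        · simp [hj', hc j hj]
      obtain ⟨hw, hlt, hbal⟩ := ih hk _ hbump_lt
      rw [hstep]
      simp only [Finset.mem_Icc] at hw ⊢
      refine ⟨by omega, hlt, fun j => ?_⟩
      rw [hbal j]
      rcases eq_or_ne j (k + 1) with rfl | hj
      · simp only [Function.update_self]; split_ifs <;> omega
      · simp only [Function.update_of_ne hj]; split_ifs <;> omega

lemma runChances_counter_lt (n : ℕ) (hn : 1 ≤ n) (N : ℕ) :
    ∀ j, 1 ≤ j → (runChances n N).2 j < j := by
  induction N with
  | zero => intro j hj; simp only [runChances]; omega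
  | succ N ih => exact (passStep_spec n hn _ ih).2.1

/-- Chances received so far by agent `j`: `j` for each item it took, plus its current counter. -/
def chancesTo (n N j : ℕ) : ℕ := j * (runChances n N).1 j + (runChances n N).2 j

lemma chancesTo_add_sum_taken (n : ℕ) (hn : 1 ≤ n) (N : ℕ) :
    ∀ j ≤ n, chancesTo n N j + ∑ i ∈ Finset.Ioc j n, (runChances n N).1 i = N := by
  induction N with
  | zero => intro j _; simp [chancesTo, runChances]
  | succ N ih =>
    intro j hj
    obtain ⟨hw, -, hbal⟩ := passStep_spec n hn _ (runChances_counter_lt n hn N)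
    set w := (passStep (runChances n N).2 n).1
    have htaken : ∀ i, (runChances n (N + 1)).1 i =
        (runChances n N).1 i + if i = w then 1 else 0 := by
      intro i
      simp only [runChances, Function.update_apply]
      split_ifs with h <;> simp [h]
    have hsum : ∑ i ∈ Finset.Ioc j n, (runChances n (N + 1)).1 i =
        ∑ i ∈ Finset.Ioc j n, (runChances n N).1 i + if j < w then 1 else 0 := by
      simp only [htaken, Finset.sum_add_distrib, Finset.sum_ite_eq', Finset.mem_Ioc]
      simp only [Finset.mem_Icc] at hw
      congr 1; split_ifs <;> omega
    have hprev := ih j hj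
    have hcounter := hbal j
    rw [chancesTo] at hprev ⊢
    rw [hsum, htaken j]
    change j * _ + (passStep (runChances n N).2 n).2 j + _ = _
    simp only [Finset.mem_Icc] at hw
    split_ifs at hcounter ⊢ <;> simp only [mul_add, mul_one, add_zero] <;> omega

lemma chancesTo_self (n : ℕ) (hn : 1 ≤ n) (N : ℕ) : chancesTo n N n = N := by
  simpa using chancesTo_add_sum_taken n hn N n le_rfl

lemma chancesTo_add_taken_succ (n : ℕ) (hn : 1 ≤ n) (N : ℕ) {j : ℕ} (hj : j < n) :
    chancesTo n N j + (runChances n N).1 (j + 1) = chancesTo n N (j + 1) := by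
  have h := chancesTo_add_sum_taken n hn N j hj.le
  have hsucc := chancesTo_add_sum_taken n hn N (j + 1) hj
  rw [← Finset.insert_Ioc_add_one_left_eq_Ioc hj, Finset.sum_insert (by simp)] at h
  omega

lemma chancesTo_lt (n : ℕ) (hn : 1 ≤ n) (N : ℕ) {j : ℕ} (hj : 1 ≤ j) :
    chancesTo n N j < j * ((runChances n N).1 j + 1) := by
  have := runChances_counter_lt n hn N j hj
  rw [chancesTo, mul_add_one]
  omega

lemma mul_chancesTo_succ_le (n : ℕ) (hn : 1 ≤ n) (N : ℕ) {j : ℕ} (hj : j < n) :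
    j * chancesTo n N (j + 1) ≤ (j + 1) * chancesTo n N j := by
  have hstep := chancesTo_add_taken_succ n hn N hj
  have htaken : (j + 1) * (runChances n N).1 (j + 1) ≤ chancesTo n N (j + 1) :=
    Nat.le_add_right _ _
  nlinarith

lemma mul_le_mul_of_succ_ratio_le (f : ℕ → ℕ) {m : ℕ}
    (hf : ∀ i, 1 ≤ i → i < m → i * f (i + 1) ≤ (i + 1) * f i) {j : ℕ} (hj : 1 ≤ j)
    (hjm : j ≤ m) : j * f m ≤ m * f j := by
  induction m, hjm using Nat.le_induction with
  | base => rfl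
  | succ m hjm ih =>
    have ih := ih fun i hi him => hf i hi (by omega)
    have hm := hf m (by omega) (by omega)
    refine Nat.le_of_mul_le_mul_left ?_ (show 0 < m by omega)
    calc m * (j * f (m + 1)) = j * (m * f (m + 1)) := by ring
      _ ≤ j * ((m + 1) * f m) := Nat.mul_le_mul_left _ hm
      _ = (m + 1) * (j * f m) := by ring
      _ ≤ (m + 1) * (m * f j) := Nat.mul_le_mul_left _ ih
      _ = m * ((m + 1) * f j) := by ring

theorem stmt_8_general (n N : ℕ) (k : ℕ) (hk1 : 1 ≤ k) (hkn : k ≤ n) :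
    (N : ℝ) / n - 1 ≤ ((runChances n N).1 k : ℝ) := by
  have hn : 1 ≤ n := hk1.trans hkn
  have hshare : k * N ≤ n * chancesTo n N k := by
    simpa only [chancesTo_self n hn N] using mul_le_mul_of_succ_ratio_le (chancesTo n N)
      (fun i _ hi => mul_chancesTo_succ_le n hn N hi) hk1 hkn
  have hlt := chancesTo_lt n hn N hk1
  have hN : N < n * ((runChances n N).1 k + 1) := by
    refine Nat.lt_of_mul_lt_mul_left (a := k) ?_
    calc k * N ≤ n * chancesTo n N k := hshare
      _ < n * (k * ((runChances n N).1 k + 1)) := Nat.mul_lt_mul_of_pos_left hlt (by omega)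
      _ = k * (n * ((runChances n N).1 k + 1)) := by ring
  have hn' : (0 : ℝ) < n := by exact_mod_cast hn
  rw [sub_le_iff_le_add, div_le_iff₀ hn']
  exact_mod_cast hN.le.trans_eq (mul_comm _ _)

theorem stmt_8 (n N : ℕ) (hn : 1 ≤ n) (hN : 1 ≤ N) (k : ℕ) (hk1 : 1 ≤ k) (hkn : k ≤ n) :
    (N : ℝ) / n - 1 ≤ ((runChances n N).1 k : ℝ) :=
  stmt_8_general n N k hk1 hkn
end

section
/- Let n ≥ 2. For any deterministic online allocation algorithm for n agents, there is an input sequence of n items, each with values in {0,1}, such that the offline optimal egalitarian social welfare is 1 but the algorithm's egalitarian social welfare is 0. Hence the strict competitive ratio of any deterministic algorithm is 0. -/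
theorem stmt_11 (n : ℕ) (hn : 2 ≤ n)
    (A : List (Fin n → ℝ) → Fin n) :
    ∃ v : Fin n → Fin n → ℝ,
      (∀ j i, v j i = 0 ∨ v j i = 1) ∧
      (∃ B : Fin n → Fin n,
        (⨅ i : Fin n, ∑ j : Fin n, if B j = i then v j i else 0) = 1) ∧
      (⨅ i : Fin n, ∑ j : Fin n,
        if A ((List.ofFn v).take ((j : ℕ) + 1)) = i then v j i else 0) = 0 := by
  classical
  obtain ⟨m, rfl⟩ : ∃ m, n = m + 1 := ⟨n - 1, by omega⟩
  have hm : 1 ≤ m := by omega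
  set z : Fin (m + 1) := ⟨0, by omega⟩ with hzdef
  set o : Fin (m + 1) := ⟨1, by omega⟩ with hodef
  have hzo : z ≠ o := by simp [hzdef, hodef, Fin.ext_iff]
  set c : Fin (m + 1) → ℝ := fun _ => 1 with hcdef
  set i₀ : Fin (m + 1) := A [c] with hi0
  set i' : Fin (m + 1) := if i₀ = z then o else z with hi'
  have hne : i' ≠ i₀ := by
    by_cases h : i₀ = z
    · simp only [hi', if_pos h, h]; exact fun hh => hzo hh.symm
    · simp only [hi', if_neg h]; exact fun hh => h hh.symm
  set v : Fin (m + 1) → Fin (m + 1) → ℝ :=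
    fun j i => if j = z then 1 else if i = i' then 0 else 1 with hv
  have hv0 : v 0 = c := by
    funext i
    have : (0 : Fin (m + 1)) = z := by simp [hzdef, Fin.ext_iff]
    simp [hv, this, hcdef]
  have htake : (List.ofFn v).take 1 = [c] := by
    rw [List.ofFn_succ]
    simp [hv0]
  refine ⟨v, ?_, ?_, ?_⟩
  · intro j i
    simp only [hv]
    split_ifs <;> simp
  · refine ⟨fun j => Equiv.swap z i' j, ?_⟩
    haveI : Nonempty (Fin (m + 1)) := ⟨z⟩
    have key : ∀ i : Fin (m + 1),
        (∑ j : Fin (m + 1), if Equiv.swap z i' j = i then v j i else 0) = 1 := by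
      intro i
      have h1 : (∑ j : Fin (m + 1), if Equiv.swap z i' j = i then v j i else 0)
          = ∑ j : Fin (m + 1), if j = Equiv.swap z i' i then v j i else 0 := by
        apply Finset.sum_congr rfl
        intro j _
        congr 1
        simp [Equiv.apply_eq_iff_eq_symm_apply, Equiv.symm_swap]
      rw [h1, Finset.sum_ite_eq']
      simp only [Finset.mem_univ, if_pos]
      by_cases hi : i = i'
      · subst hi
        simp [Equiv.swap_apply_right, hv]
      · by_cases hiz : i = z
        · subst hiz
          have hiz' : i' ≠ z := fun h => hi h.symm
          simp [Equiv.swap_apply_left, hv, hiz', Ne.symm hiz']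
        · rw [Equiv.swap_apply_of_ne_of_ne hiz hi]
          simp [hv, hiz, hi]
    rw [iInf_congr key, ciInf_const]
  · haveI : Nonempty (Fin (m + 1)) := ⟨z⟩
    have nonneg : ∀ i : Fin (m + 1),
        (0:ℝ) ≤ ∑ j : Fin (m + 1),
          if A ((List.ofFn v).take ((j : ℕ) + 1)) = i then v j i else 0 := by
      intro i
      apply Finset.sum_nonneg
      intro j _
      split_ifs with h
      · simp only [hv]; split_ifs <;> norm_num
      · exact le_refl 0
    have hsum : (∑ j : Fin (m + 1),
        if A ((List.ofFn v).take ((j : ℕ) + 1)) = i' then v j i' else 0) = 0 := by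
      apply Finset.sum_eq_zero
      intro j _
      by_cases hj : j = z
      · subst hj
        have : ((z : ℕ) + 1) = 1 := by simp [hzdef]
        rw [this, htake]
        rw [if_neg (fun h => hne (hi0.trans h).symm)]
      · simp [hv, hj]
    apply le_antisymm
    · have bdd : BddBelow (Set.range fun i : Fin (m + 1) =>
          ∑ j : Fin (m + 1), if A ((List.ofFn v).take ((j : ℕ) + 1)) = i then v j i else 0) := by
        refine ⟨0, ?_⟩
        rintro x ⟨i, rfl⟩
        exact nonneg i
      exact (ciInf_le bdd i').trans (le_of_eq hsum)
    · exact le_ciInf nonneg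
end

section
/- Fix ε ∈ (0,1), integers m ≥ 1, n ≥ 1 and a real W ≥ 0 with εW/m ≤ 1. Suppose nonnegative random variables X_{i,j} ∈ [0,1] (i ∈ [n], j ∈ [m]) are such that the potentials Φ(s) = ∑_{i=1}^n E[(1-ε)^{∑_{j=1}^s X_{i,j}}] · (1 - εW/m)^{m-s} satisfy Φ(m) ≤ Φ(0). Then Pr[min_i ∑_{j=1}^m X_{i,j} ≤ (1-ε)W] ≤ n · exp(-ε²W/2). -/
/-!
A Chernoff argument: for `b = 1 - ε` the map `s ↦ b ^ s` is decreasing, so the event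
`∑ⱼ X i j ≤ (1 - ε) W` is the event `b ^ ((1 - ε) W) ≤ b ^ ∑ⱼ X i j`, whose probability Markov's
inequality bounds by `b ^ (-(1 - ε) W) · 𝔼[b ^ ∑ⱼ X i j]`. A union bound over `i` and the bound on
the potential give `n (1 - εW/m)^m / b ^ ((1 - ε) W) ≤ n e^{-εW} / b ^ ((1 - ε) W)`, and
`(1 - ε)^{-(1 - ε)} ≤ e^{ε - ε²/2}`, which is `sinh t ≤ t` at `t = log (1 - ε) ≤ 0`, finishes.
-/

open MeasureTheory

namespace Real

theorem sub_inv_div_two_le_log {y : ℝ} (hy0 : 0 < y) (hy1 : y ≤ 1) : (y - y⁻¹) / 2 ≤ log y := by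
  rw [← sinh_log hy0]
  exact sinh_le_self_iff.2 (log_nonpos hy0.le hy1)

theorem sq_sub_one_div_two_le_mul_log {y : ℝ} (hy0 : 0 < y) (hy1 : y ≤ 1) :
    (y ^ 2 - 1) / 2 ≤ y * log y := by
  have h := mul_le_mul_of_nonneg_left (sub_inv_div_two_le_log hy0 hy1) hy0.le
  rwa [show y * ((y - y⁻¹) / 2) = (y ^ 2 - 1) / 2 by field_simp] at h

theorem exp_neg_mul_le_one_sub_rpow_mul_exp {ε W : ℝ} (hε0 : 0 ≤ ε) (hε1 : ε < 1) (hW : 0 ≤ W) :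
    exp (-(ε * W)) ≤ (1 - ε) ^ ((1 - ε) * W) * exp (-(ε ^ 2) * W / 2) := by
  have hb : 0 < 1 - ε := by linarith
  rw [rpow_def_of_pos hb, ← exp_add, exp_le_exp]
  have key := mul_nonneg hW
    (sub_nonneg.2 (sq_sub_one_div_two_le_mul_log hb (by linarith : 1 - ε ≤ 1)))
  nlinarith

end Real

section Chernoff

variable {Ω ι : Type*} [MeasurableSpace Ω] {P : Measure Ω}

theorem measureReal_iInf_le_le_sum [IsFiniteMeasure P] [Fintype ι] [Nonempty ι]
    (S : ι → Ω → ℝ) (c : ℝ) :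
    P.real {ω | ⨅ i, S i ω ≤ c} ≤ ∑ i, P.real {ω | S i ω ≤ c} := by
  refine (measureReal_mono ?_).trans (measureReal_iUnion_fintype_le _)
  intro ω hω
  obtain ⟨i, hi⟩ := exists_eq_ciInf_of_finite (f := fun i => S i ω)
  exact Set.mem_iUnion.2 ⟨i, hi.le.trans hω⟩

theorem integrable_rpow_of_nonneg [IsFiniteMeasure P] {b : ℝ} (hb0 : 0 < b) (hb1 : b ≤ 1)
    {S : Ω → ℝ} (hS : Measurable S) (hS0 : ∀ ω, 0 ≤ S ω) :
    Integrable (fun ω => b ^ S ω) P := by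
  refine Integrable.of_bound (measurable_const.pow hS).aestronglyMeasurable 1
    (Filter.Eventually.of_forall fun ω => ?_)
  rw [Real.norm_of_nonneg (Real.rpow_nonneg hb0.le _)]
  exact Real.rpow_le_one hb0.le hb1 (hS0 ω)

/-- Markov's inequality for `b ^ S`, which is decreasing in `S` when `b < 1`. -/
theorem rpow_mul_measureReal_le_integral {b : ℝ} (hb0 : 0 < b) (hb1 : b < 1) {S : Ω → ℝ}
    (hS : Integrable (fun ω => b ^ S ω) P) (c : ℝ) :
    b ^ c * P.real {ω | S ω ≤ c} ≤ ∫ ω, b ^ S ω ∂P := by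
  have hset : {ω | S ω ≤ c} = {ω | b ^ c ≤ b ^ S ω} := by
    ext ω
    exact (Real.rpow_le_rpow_left_iff_of_base_lt_one hb0 hb1).symm
  rw [hset]
  exact mul_meas_ge_le_integral_of_nonneg
    (Filter.Eventually.of_forall fun ω => Real.rpow_nonneg hb0.le _) hS _

end Chernoff

theorem stmt_14 {Ω : Type*} [MeasurableSpace Ω] (P : Measure Ω) [IsProbabilityMeasure P]
    (ε : ℝ) (hε0 : 0 < ε) (hε1 : ε < 1) (m n : ℕ) (hm : 1 ≤ m) (hn : 1 ≤ n)
    (W : ℝ) (hW : 0 ≤ W) (hWm : ε * W / m ≤ 1)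
    (X : Fin n → Fin m → Ω → ℝ)
    (hX : ∀ i j ω, X i j ω ∈ Set.Icc (0 : ℝ) 1)
    (hmeas : ∀ i j, Measurable (X i j))
    (hΦ : ∑ i : Fin n, ∫ ω, (1 - ε) ^ (∑ j : Fin m, X i j ω) ∂P ≤
          (n : ℝ) * (1 - ε * W / m) ^ m) :
    (P {ω | (⨅ i : Fin n, ∑ j : Fin m, X i j ω) ≤ (1 - ε) * W}).toReal ≤
      (n : ℝ) * Real.exp (-(ε ^ 2) * W / 2) := by
  have : Nonempty (Fin n) := ⟨⟨0, hn⟩⟩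
  have hb0 : 0 < 1 - ε := by linarith
  have hb1 : 1 - ε < 1 := by linarith
  set a := (1 - ε) ^ ((1 - ε) * W)
  have hint : ∀ i, Integrable (fun ω => (1 - ε) ^ ∑ j, X i j ω) P := fun i =>
    integrable_rpow_of_nonneg hb0 hb1.le (Finset.measurable_sum _ fun j _ => hmeas i j)
      fun ω => Finset.sum_nonneg fun j _ => (hX i j ω).1
  have hpow : (1 - ε * W / m) ^ m ≤ Real.exp (-(ε * W)) := by
    have hm0 : (0 : ℝ) < m := by exact_mod_cast hm
    exact Real.one_sub_div_pow_le_exp_neg ((div_le_one hm0).1 hWm)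
  have hprob : a * P.real {ω | ⨅ i, ∑ j, X i j ω ≤ (1 - ε) * W} ≤
      a * ((n : ℝ) * Real.exp (-(ε ^ 2) * W / 2)) :=
    calc a * P.real {ω | ⨅ i, ∑ j, X i j ω ≤ (1 - ε) * W}
        ≤ ∑ i, a * P.real {ω | ∑ j, X i j ω ≤ (1 - ε) * W} := by
          rw [← Finset.mul_sum]
          exact mul_le_mul_of_nonneg_left (measureReal_iInf_le_le_sum _ _) (by positivity)
      _ ≤ ∑ i, ∫ ω, (1 - ε) ^ ∑ j, X i j ω ∂P := Finset.sum_le_sum fun i _ =>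
          rpow_mul_measureReal_le_integral hb0 hb1 (hint i) _
      _ ≤ n * Real.exp (-(ε * W)) := hΦ.trans (by gcongr)
      _ ≤ n * (a * Real.exp (-(ε ^ 2) * W / 2)) := by
          gcongr
          exact Real.exp_neg_mul_le_one_sub_rpow_mul_exp hε0.le hε1 hW
      _ = a * ((n : ℝ) * Real.exp (-(ε ^ 2) * W / 2)) := by ring
  exact le_of_mul_le_mul_left hprob (by positivity)
end

section
/- Let n ≥ 2 agents t and let the greedy-type algorithm allocate each arriving item e to an agent i maximizing φ(v_i(A_i ∪ {e})) - φ(v_i(A_i)) for a monotone increasing function φ : ℝ≥0 → ℝ≥0, where A_i is agent i's current bundle. For n = 2, when given 1/ε² identical items with value vector (1, ε) (ε the inverse of a large integer), if the algorithm allocates at most (3-√5)/(2ε²) of them to agent 2 and then 1/ε items with value vector (1,0) arrive, then the algorithm's egalitarian welfare is at most ((3-√5)/2)·(1/ε) while the offline optimum is 1/ε. -/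
/-- Adversarial instance for greedy-type algorithms with `n = 2` agents and `ε = 1/K`:
first `K^2` items with value vector `(1, 1/K)`, then `K` items with value vector `(1, 0)`.
If the algorithm gives `t` of the first batch and `s` of the second batch to agent 2,
with `t ≤ (3-√5)/2 · K^2`, then its egalitarian welfare
`min (agent 1's utility) (agent 2's utility)` is at most `((3-√5)/2) · K`,
while some (offline) allocation achieves welfare `K = 1/ε`. -/
theorem stmt_18 (K : ℕ) (hK : 1 ≤ K) (t s : ℕ) (ht : t ≤ K ^ 2) (hs : s ≤ K)
    (hsmall : (t : ℝ) ≤ (3 - Real.sqrt 5) / 2 * K ^ 2) :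
    min (((K : ℝ) ^ 2 - t) + ((K : ℝ) - s)) ((t : ℝ) * (1 / K)) ≤
        (3 - Real.sqrt 5) / 2 * K ∧
      ∃ t' s' : ℕ, t' ≤ K ^ 2 ∧ s' ≤ K ∧
        (K : ℝ) ≤ min (((K : ℝ) ^ 2 - t') + ((K : ℝ) - s')) ((t' : ℝ) * (1 / K)) := by
  have hKpos : (0 : ℝ) < K := by exact_mod_cast hK
  constructor
  · refine (min_le_right _ _).trans ?_
    rw [mul_one_div, div_le_iff₀ hKpos]
    calc (t : ℝ) ≤ (3 - Real.sqrt 5) / 2 * K ^ 2 := hsmall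
      _ = (3 - Real.sqrt 5) / 2 * K * K := by ring
  · refine ⟨K ^ 2, 0, le_refl _, Nat.zero_le _, ?_⟩
    push_cast
    rw [mul_one_div]
    have h1 : (K : ℝ) ^ 2 / K = K := by field_simp
    rw [h1]
    simp
end

section
/- For n ≥ 2 agents, suppose for each i ∈ [n] with probability 1/n the input consists of k items with value vector all-ones followed by (n-1)k items whose value vector is all-ones except coordinate i which is 0. Then the expected offline optimum equals k, while for any deterministic online algorithm the expected egalitarian welfare is at most k/n. -/
/-!
Cutting the `n·k` items into `n` blocks of `k` and giving the all-ones block to agent `i` and one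
other block to each remaining agent gives everybody utility `k`. Conversely, in scenario `i` agent
`i` values only the first `k` items, so its utility, and hence the welfare, is at most the number
of those items it receives. An online algorithm allocates the first `k` items before `i` is
revealed, so these numbers sum to `k` over the scenarios, and the average welfare is at most `k/n`.
-/

/-- Utility of agent `i'` in scenario `i` (out of `n` scenarios) under the allocation
`c : ℕ → Fin n` of the `n·k` items: the first `k` items are worth 1 to everyone, and
each of the remaining `(n-1)·k` items is worth 1 to every agent except agent `i`. -/
noncomputable def scenarioUtil (n k : ℕ) (i : Fin n) (c : ℕ → Fin n) (i' : Fin n) : ℝ :=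
  ∑ j ∈ Finset.range (n * k), if c j = i' ∧ (j < k ∨ i' ≠ i) then 1 else 0

/-- Egalitarian welfare in scenario `i` under allocation `c`. -/
noncomputable def scenarioWelfare (n k : ℕ) (i : Fin n) (c : ℕ → Fin n) : ℝ :=
  ⨅ i' : Fin n, scenarioUtil n k i c i' 

open Finset

lemma card_filter_div_eq_of_lt {n k m : ℕ} (hm : m < n) :
    #{j ∈ range (n * k) | j / k = m} = k := by
  rcases Nat.eq_zero_or_pos k with rfl | hk
  · simp
  have hmn : m * k + k ≤ n * k := by simpa [add_one_mul] using Nat.mul_le_mul_right k hm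
  have hblock : {j ∈ range (n * k) | j / k = m} = Ico (m * k) (m * k + k) := by
    ext j
    simp only [mem_filter, mem_range, mem_Ico, Nat.div_eq_iff hk]
    omega
  rw [hblock, Nat.card_Ico, Nat.add_sub_cancel_left]

def blockAllocation (n k : ℕ) (i : Fin n) (j : ℕ) : Fin n :=
  if h : j < n * k then Equiv.swap ⟨0, i.pos⟩ i (Fin.divNat ⟨j, h⟩) else i

section

variable {n k : ℕ}

lemma scenarioWelfare_le_scenarioUtil (i : Fin n) (c : ℕ → Fin n) (i' : Fin n) :
    scenarioWelfare n k i c ≤ scenarioUtil n k i c i' :=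
  ciInf_le (Finite.bddBelow_range _) i'

lemma scenarioUtil_self (i : Fin n) (c : ℕ → Fin n) :
    scenarioUtil n k i c i = #{j ∈ range k | c j = i} := by
  have hk : k ≤ n * k := Nat.le_mul_of_pos_left k i.pos
  rw [scenarioUtil, sum_boole]
  congr 2
  ext j
  simp only [mem_filter, mem_range, ne_eq, not_true_eq_false, or_false]
  omega

lemma scenarioUtil_self_le (i : Fin n) (c : ℕ → Fin n) : scenarioUtil n k i c i ≤ k := by
  rw [scenarioUtil_self]
  exact_mod_cast (card_filter_le _ _).trans (card_range k).le

lemma scenarioUtil_eq_card_of_forall_lt {i : Fin n} {c : ℕ → Fin n}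
    (hc : ∀ j < n * k, c j = i → j < k) (i' : Fin n) :
    scenarioUtil n k i c i' = #{j ∈ range (n * k) | c j = i'} := by
  rw [scenarioUtil, sum_boole]
  congr 2
  refine filter_congr fun j hj => and_iff_left_of_imp fun hcj => ?_
  by_cases hi : i' = i
  · exact .inl (hc j (mem_range.1 hj) (hcj.trans hi))
  · exact .inr hi

lemma blockAllocation_eq_iff {i i' : Fin n} {j : ℕ} (hj : j < n * k) :
    blockAllocation n k i j = i' ↔ j / k = Equiv.swap ⟨0, i.pos⟩ i i' := by
  rw [blockAllocation, dif_pos hj, Equiv.swap_apply_eq_iff, Fin.ext_iff, Fin.coe_divNat]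

lemma lt_of_blockAllocation_eq_self {i : Fin n} {j : ℕ} (hj : j < n * k)
    (hi : blockAllocation n k i j = i) : j < k := by
  rw [blockAllocation_eq_iff hj, Equiv.swap_apply_right] at hi
  exact (Nat.div_eq_zero_iff.1 hi).resolve_left fun hk => by simp [hk] at hj

lemma scenarioWelfare_blockAllocation (i : Fin n) :
    scenarioWelfare n k i (blockAllocation n k i) = k := by
  have hutil (i' : Fin n) : scenarioUtil n k i (blockAllocation n k i) i' = k := by
    rw [scenarioUtil_eq_card_of_forall_lt (fun j hj => lt_of_blockAllocation_eq_self hj),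
      filter_congr fun j hj => blockAllocation_eq_iff (mem_range.1 hj),
      card_filter_div_eq_of_lt (Equiv.swap _ i i').isLt]
  have : Nonempty (Fin n) := ⟨i⟩
  simp only [scenarioWelfare, hutil, ciInf_const]

lemma sum_scenarioUtil_self_of_eqOn (a : ℕ → Fin n) (c : Fin n → ℕ → Fin n)
    (hc : ∀ i, ∀ j < k, c i j = a j) :
    ∑ i, scenarioUtil n k i (c i) i = k := by
  have hfiber (i : Fin n) : #{j ∈ range k | c i j = i} = #{j ∈ range k | a j = i} :=
    congrArg _ (filter_congr fun j hj => by rw [hc i j (mem_range.1 hj)])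
  simp only [scenarioUtil_self, hfiber]
  exact_mod_cast (card_eq_sum_card_fiberwise (t := univ) fun _ _ => mem_univ _).symm.trans
    (card_range k)

end

theorem stmt_19_general (n k : ℕ)
    (a : ℕ → Fin n) (b : Fin n → ℕ → Fin n) :
    (∀ i : Fin n,
        (∃ c : ℕ → Fin n, scenarioWelfare n k i c = k) ∧
        (∀ c : ℕ → Fin n, scenarioWelfare n k i c ≤ k)) ∧
      (1 / (n : ℝ)) *
          ∑ i : Fin n,
            scenarioWelfare n k i (fun j => if j < k then a j else b i (j - k)) ≤
        (k : ℝ) / n := by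
  refine ⟨fun i => ⟨⟨blockAllocation n k i, scenarioWelfare_blockAllocation i⟩,
    fun c => (scenarioWelfare_le_scenarioUtil i c i).trans (scenarioUtil_self_le i c)⟩, ?_⟩
  have hsum : ∑ i : Fin n,
      scenarioWelfare n k i (fun j => if j < k then a j else b i (j - k)) ≤ k := by
    refine (sum_le_sum fun i _ => scenarioWelfare_le_scenarioUtil i _ i).trans
      (sum_scenarioUtil_self_of_eqOn a _ fun i j hj => ?_).le
    simp only [if_pos hj]
  rw [one_div_mul_eq_div]
  exact div_le_div_of_nonneg_right hsum n.cast_nonneg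

theorem stmt_19 (n k : ℕ) (hn : 2 ≤ n) (hk : 1 ≤ k)
    (a : ℕ → Fin n) (b : Fin n → ℕ → Fin n) :
    (∀ i : Fin n,
        (∃ c : ℕ → Fin n, scenarioWelfare n k i c = k) ∧
        (∀ c : ℕ → Fin n, scenarioWelfare n k i c ≤ k)) ∧
      (1 / (n : ℝ)) *
          ∑ i : Fin n,
            scenarioWelfare n k i (fun j => if j < k then a j else b i (j - k)) ≤
        (k : ℝ) / n :=
  stmt_19_general n k a b
end
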